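/- arXiv:1912.07379 — 4 statements merged into one kernel-verified Lean document; each statement's English description precedes it below -/
import Mathlib

section
/- Let R be a commutative algebra over a field K and let I be a nonzero two-sided ideal of the ring D(R) of K-linear differential operators on R (defined via the order filtration D_0(R) = R, D_i(R) = {u ∈ End_K(R) : [r,u] ∈ D_{i-1}(R) for all r ∈ R}). Then I ∩ R ≠ 0, i.e., every nonzero ideal of D(R) has nonzero intersection with R. -/
/-- The multiplication operator on a commutative `K`-algebra `R` given by an element `r : R`,
viewed as a `K`-linear endomorphism of `R`.  This identifies `R` with `D_0(R)`. -/
noncomputable def mulOp (K : Type*) {R : Type*} [Field K] [CommRing R] [Algebra K R]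
    (r : R) : Module.End K R := Algebra.lmul K R r

/-- `IsDO K n u` means that `u` is a (`K`-linear) differential operator on `R` of order at
most `n` in the sense of the order filtration: `D_{-1}(R) = 0` and
`D_n(R) = {u ∈ End_K(R) : [r, u] ∈ D_{n-1}(R) for all r ∈ R}`. -/
def IsDO (K : Type*) {R : Type*} [Field K] [CommRing R] [Algebra K R] :
    ℕ → Module.End K R → Prop
  | 0, u => ∀ r : R, mulOp K r * u = u * mulOp K r
  | n + 1, u => ∀ r : R, IsDO K n (mulOp K r * u - u * mulOp K r)

/-- The ring `D(R) = ⋃ D_n(R)` of all `K`-linear differential operators on `R`,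
as a subset of `End_K(R)`. -/
def DiffOp (K R : Type*) [Field K] [CommRing R] [Algebra K R] :
    Set (Module.End K R) := {u | ∃ n, IsDO K n u}

/-- `I` is a two-sided ideal of the ring `D(R)`. -/
structure IsIdealOfD (K R : Type*) [Field K] [CommRing R] [Algebra K R]
    (I : Set (Module.End K R)) : Prop where
  subset : I ⊆ DiffOp K R
  zero_mem : (0 : Module.End K R) ∈ I
  add_mem : ∀ u v, u ∈ I → v ∈ I → u + v ∈ I
  neg_mem : ∀ u, u ∈ I → -u ∈ I
  mul_mem_left : ∀ d u, d ∈ DiffOp K R → u ∈ I → d * u ∈ I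
  mul_mem_right : ∀ d u, d ∈ DiffOp K R → u ∈ I → u * d ∈ I

/-!
Commutators with multiplication operators keep an ideal of `D(R)` inside itself and lower the
order. For a nonzero `u ∈ I`, either some commutator `[r, u]` is nonzero, giving a nonzero
element of `I` of smaller order, or `u` commutes with all of `R`, in which case `u` is
multiplication by `u 1 ≠ 0`. Descending on the order therefore ends in `R ∩ I`.
-/

section

variable {K R : Type*} [Field K] [CommRing R] [Algebra K R]

lemma mulOp_apply (r x : R) : mulOp K r x = r * x := rfl

lemma mulOp_zero : mulOp K (0 : R) = 0 := map_zero (Algebra.lmul K R)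

lemma isDO_zero_mulOp (r : R) : IsDO K 0 (mulOp K r) := by
  intro s
  ext x
  simp only [Module.End.mul_apply, mulOp_apply, mul_left_comm]

lemma mulOp_mem_diffOp (r : R) : mulOp K r ∈ DiffOp K R := ⟨0, isDO_zero_mulOp r⟩

lemma eq_mulOp_apply_one_of_isDO_zero {u : Module.End K R} (hu : IsDO K 0 u) :
    u = mulOp K (u 1) := by
  ext r
  have h := congrArg (fun w : Module.End K R => w 1) (hu r)
  simp only [Module.End.mul_apply, mulOp_apply, mul_one] at h
  rw [mulOp_apply, mul_comm, h]

namespace IsIdealOfD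

variable {I : Set (Module.End K R)}

lemma sub_mem (hI : IsIdealOfD K R I) {u v : Module.End K R} (hu : u ∈ I) (hv : v ∈ I) :
    u - v ∈ I := by
  rw [sub_eq_add_neg]
  exact hI.add_mem _ _ hu (hI.neg_mem _ hv)

lemma commutator_mulOp_mem (hI : IsIdealOfD K R I) (r : R) {u : Module.End K R}
    (hu : u ∈ I) : mulOp K r * u - u * mulOp K r ∈ I :=
  hI.sub_mem (hI.mul_mem_left _ _ (mulOp_mem_diffOp r) hu)
    (hI.mul_mem_right _ _ (mulOp_mem_diffOp r) hu)

lemma exists_ne_zero_isDO_zero (hI : IsIdealOfD K R I) :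
    ∀ (n : ℕ) (u : Module.End K R), u ∈ I → u ≠ 0 → IsDO K n u →
      ∃ v ∈ I, v ≠ 0 ∧ IsDO K 0 v
  | 0, u, huI, hu, hDO => ⟨u, huI, hu, hDO⟩
  | n + 1, u, huI, hu, hDO => by
    by_cases hcomm : ∃ r : R, mulOp K r * u - u * mulOp K r ≠ 0
    · obtain ⟨r, hr⟩ := hcomm
      exact exists_ne_zero_isDO_zero hI n _ (hI.commutator_mulOp_mem r huI) hr (hDO r)
    · simp only [ne_eq, not_exists, not_not] at hcomm
      exact ⟨u, huI, hu, fun r => sub_eq_zero.mp (hcomm r)⟩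

end IsIdealOfD

end

/-- Every nonzero two-sided ideal of `D(R)` has nonzero intersection with `R = D_0(R)`. -/
theorem stmt0 {K R : Type*} [Field K] [CommRing R] [Algebra K R]
    (I : Set (Module.End K R)) (hI : IsIdealOfD K R I)
    (hne : ∃ u ∈ I, u ≠ 0) :
    ∃ r : R, r ≠ 0 ∧ mulOp K r ∈ I := by
  obtain ⟨u, huI, hu⟩ := hne
  obtain ⟨n, hn⟩ := hI.subset huI
  obtain ⟨v, hvI, hv, hv0⟩ := hI.exists_ne_zero_isDO_zero n u huI hu hn
  have hv_eq := eq_mulOp_apply_one_of_isDO_zero hv0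
  refine ⟨v 1, fun h => hv ?_, hv_eq ▸ hvI⟩
  rw [hv_eq, h, mulOp_zero]
end

section
/- Let R be a commutative algebra over a field K and I a two-sided ideal of D(R). Then the ideal I_0 := I ∩ R of R satisfies D(R)·I_0·D(R) ∩ R = I_0, where D(R)·I_0·D(R) denotes the two-sided ideal of D(R) generated by I_0. -/
/-- The two-sided ideal `D(R)·S·D(R)` of `D(R)` generated by a subset `S ⊆ D(R)`. -/
def genD (K R : Type*) [Field K] [CommRing R] [Algebra K R]
    (S : Set (Module.End K R)) : Set (Module.End K R) :=
  ⋂₀ {J | IsIdealOfD K R J ∧ S ⊆ J}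

theorem genD_subset {K R : Type*} [Field K] [CommRing R] [Algebra K R]
    {S J : Set (Module.End K R)} (hJ : IsIdealOfD K R J) (hSJ : S ⊆ J) : genD K R S ⊆ J :=
  Set.sInter_subset_of_mem ⟨hJ, hSJ⟩

theorem subset_genD {K R : Type*} [Field K] [CommRing R] [Algebra K R]
    (S : Set (Module.End K R)) : S ⊆ genD K R S :=
  Set.subset_sInter fun _ hJ => hJ.2

/-- For a two-sided ideal `I` of `D(R)` and `I₀ := I ∩ R`, one has
`D(R)·I₀·D(R) ∩ R = I₀`. -/
theorem stmt2 {K R : Type*} [Field K] [CommRing R] [Algebra K R]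
    (I : Set (Module.End K R)) (hI : IsIdealOfD K R I) :
    {r : R | mulOp K r ∈ genD K R ((fun a : R => mulOp K a) '' {r : R | mulOp K r ∈ I})}
      = {r : R | mulOp K r ∈ I} := by
  ext r
  constructor
  · exact fun h => genD_subset hI (Set.image_preimage_subset _ _) h
  · exact fun h => subset_genD _ ⟨r, h, rfl⟩
end

section
/- Let A = K + ∑_{i≥2} K x^i ⊆ K[x] (the coordinate ring of the cusp over a field K of characteristic 0). Then Der_K(A) = K[x]·h|_A where h = x·d/dx; that is, every K-derivation of A is given by p(x)·x·d/dx restricted to A for some polynomial p ∈ K[x], and each such operator preserves A. -/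
/-- The coordinate ring of the cusp: the subalgebra `A = K + ∑_{i ≥ 2} K xⁱ` of `K[x]`,
i.e. (equivalently) the polynomials whose coefficient of `x` vanishes. -/
def cusp (K : Type*) [Field K] : Subalgebra K (Polynomial K) where
  carrier := {p | p.coeff 1 = 0}
  zero_mem' := by simp
  one_mem' := by simp [Polynomial.coeff_one]
  add_mem' := by
    intro a b ha hb
    simp only [Set.mem_setOf_eq, Polynomial.coeff_add] at *
    rw [ha, hb, add_zero]
  mul_mem' := by
    intro a b ha hb
    simp only [Set.mem_setOf_eq] at *
    rw [Polynomial.coeff_mul, Finset.Nat.sum_antidiagonal_eq_sum_range_succ_mk]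
    simp [Finset.sum_range_succ, ha, hb]
  algebraMap_mem' := by
    intro k
    simp [Polynomial.algebraMap_eq, Polynomial.coeff_C]

theorem memtest (K : Type*) [Field K] (n : ℕ) (h : n ≠ 1) :
    (Polynomial.X ^ n : Polynomial K) ∈ cusp K :=
  show (Polynomial.X ^ n : Polynomial K).coeff 1 = 0 by
    simp [Polynomial.coeff_X_pow, Ne.symm h]

/-!
A derivation of `A` is determined by `f = δ(x²)` and `g = δ(x³)`, since `x²` and `x³` generate
`A`. Differentiating `(x²)³ = (x³)²` gives `3x·f = 2g`; as `g` has no `x`-term, comparing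
coefficients of `x` forces `f(0) = 0`, and `f` has no `x`-term either, so `f = 2x²p` for some `p`.
Then `g = 3x³p`, i.e. `δ` agrees with `p·x·d/dx` on the generators, hence everywhere.
-/

open Polynomial

theorem coeff_one_mul_X_mul_derivative {R : Type*} [CommSemiring R] (p a : R[X]) :
    (p * (X * derivative a)).coeff 1 = p.coeff 0 * a.coeff 1 := by
  rw [mul_left_comm, coeff_X_mul, mul_coeff_zero, coeff_derivative, zero_add, Nat.cast_zero,
    zero_add, mul_one]

theorem X_pow_mem_adjoin_X_sq_X_cube {R : Type*} [CommSemiring R] :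
    ∀ {n : ℕ}, n ≠ 1 → (X ^ n : R[X]) ∈ Algebra.adjoin R {X ^ 2, X ^ 3}
  | 0, _ => by rw [pow_zero]; exact one_mem _
  | 2, _ => Algebra.subset_adjoin (by simp)
  | 3, _ => Algebra.subset_adjoin (by simp)
  | n + 4, _ => by
    rw [show n + 4 = 2 + (n + 2) by ring, pow_add]
    exact mul_mem (Algebra.subset_adjoin (by simp)) (X_pow_mem_adjoin_X_sq_X_cube (by omega))

namespace cusp

variable (K : Type*) [Field K]

theorem eq_adjoin_X_sq_X_cube : cusp K = Algebra.adjoin K {X ^ 2, X ^ 3} := by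
  refine le_antisymm (fun a ha => ?_) (Algebra.adjoin_le ?_)
  · rw [a.as_sum_support_C_mul_X_pow]
    refine sum_mem fun n hn => ?_
    have hn1 : n ≠ 1 := by rintro rfl; exact mem_support_iff.mp hn ha
    rw [← smul_eq_C_mul]
    exact Subalgebra.smul_mem _ (X_pow_mem_adjoin_X_sq_X_cube hn1) _
  · rintro _ (rfl | rfl)
    exacts [memtest K 2 (by norm_num), memtest K 3 (by norm_num)]

noncomputable def xSq : cusp K := ⟨X ^ 2, memtest K 2 (by norm_num)⟩

noncomputable def xCube : cusp K := ⟨X ^ 3, memtest K 3 (by norm_num)⟩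

theorem adjoin_xSq_xCube_eq_top : Algebra.adjoin K {xSq K, xCube K} = ⊤ := by
  apply Subalgebra.map_injective (f := (cusp K).val) Subtype.val_injective
  rw [← Algebra.adjoin_image, Algebra.map_top, Subalgebra.range_val, Set.image_pair]
  exact (eq_adjoin_X_sq_X_cube K).symm

variable {K}

theorem mem_iff {a : K[X]} : a ∈ cusp K ↔ a.coeff 1 = 0 := Iff.rfl

theorem mul_X_mul_derivative_mem (p : K[X]) {a : K[X]} (ha : a ∈ cusp K) :
    p * (X * derivative a) ∈ cusp K := by
  rw [mem_iff, coeff_one_mul_X_mul_derivative, mem_iff.mp ha, mul_zero]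

@[simp]
theorem coe_xSq : (xSq K : K[X]) = X ^ 2 := rfl

@[simp]
theorem coe_xCube : (xCube K : K[X]) = X ^ 3 := rfl

/-- The operator `p·h = p(x)·x·d/dx` on `A`, as a derivation with values in `K[x]`. -/
noncomputable def eulerDer (p : K[X]) : Derivation K (cusp K) K[X] :=
  (p * X) • (derivative' (R := K)).compAlgebraMap (cusp K)

theorem eulerDer_apply (p : K[X]) (a : cusp K) :
    eulerDer p a = p * (X * derivative (a : K[X])) := by
  simp [eulerDer, mul_assoc]

theorem two_mul_derivation_xCube (δ : Derivation K (cusp K) (cusp K)) :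
    2 * ((δ (xCube K) : cusp K) : K[X]) = 3 * X * ((δ (xSq K) : cusp K) : K[X]) := by
  have hx6 : xSq K ^ 3 = xCube K ^ 2 := Subtype.ext (by push_cast [coe_xSq, coe_xCube]; ring)
  have := congrArg (fun a => ((δ a : cusp K) : K[X])) hx6
  simp only [Derivation.leibniz_pow, smul_eq_mul] at this
  push_cast [coe_xSq, coe_xCube] at this
  apply mul_left_cancel₀ (pow_ne_zero 3 (X_ne_zero (R := K)))
  linear_combination -this

theorem exists_eulerDer_eq [CharZero K] (δ : Derivation K (cusp K) (cusp K)) :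
    ∃ p, (Algebra.linearMap (cusp K) K[X]).compDer δ = eulerDer p := by
  set f : K[X] := ((δ (xSq K) : cusp K) : K[X])
  set g : K[X] := ((δ (xCube K) : cusp K) : K[X])
  have hfg : 2 * g = 3 * X * f := two_mul_derivation_xCube δ
  have hf1 : f.coeff 1 = 0 := (δ _).2
  have hg1 : g.coeff 1 = 0 := (δ _).2
  have hf0 : f.coeff 0 = 0 := by
    have := congrArg (coeff · 1) hfg
    simpa [mul_assoc, coeff_X_mul, hg1] using this.symm
  obtain ⟨q, hq⟩ : X ^ 2 ∣ f := X_pow_dvd_iff.mpr fun d hd => by interval_cases d <;> assumption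
  have hg : 2 * g = 3 * X ^ 3 * q := by linear_combination hfg + 3 * X * hq
  have h2 : (2 : K[X]) * C 2⁻¹ = 1 := by
    rw [← map_ofNat C 2, ← C_mul, mul_inv_cancel₀ two_ne_zero, C_1]
  refine ⟨C 2⁻¹ * q, Derivation.ext_of_adjoin_eq_top _ (adjoin_xSq_xCube_eq_top K) ?_⟩
  rintro _ (rfl | rfl)
  · change f = _
    simp only [eulerDer_apply, coe_xSq, derivative_X_pow, Nat.cast_ofNat, map_ofNat]
    linear_combination hq - X ^ 2 * q * h2
  · change g = _
    simp only [eulerDer_apply, coe_xCube, derivative_X_pow, Nat.cast_ofNat, map_ofNat]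
    linear_combination C 2⁻¹ * hg - g * h2

end cusp

/-- `Der_K(A) = K[x]·h` for the cusp algebra `A`, where `h = x·d/dx`: every operator
`p(x)·x·d/dx` maps `A` into `A`, and every `K`-derivation of `A` is of this form. -/
theorem stmt8 (K : Type*) [Field K] [CharZero K] :
    (∀ (p : Polynomial K), ∀ a ∈ cusp K,
        p * (Polynomial.X * Polynomial.derivative a) ∈ cusp K) ∧
    (∀ δ : Derivation K (cusp K) (cusp K), ∃ p : Polynomial K,
        ∀ a : cusp K, ((δ a : Polynomial K)) =
          p * (Polynomial.X * Polynomial.derivative (a : Polynomial K))) := by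
  refine ⟨fun p a ha => cusp.mul_X_mul_derivative_mem p ha, fun δ => ?_⟩
  obtain ⟨p, hp⟩ := cusp.exists_eulerDer_eq δ
  exact ⟨p, fun a => by rw [← cusp.eulerDer_apply, ← hp]; rfl⟩
end

section
/- Let char K = 0, h = x∂ acting on K[x,x^{-1}], and set w_{-2} := (h+2)(h−1)x^{-2} and w_{-1} := (h+1)(h−1)x^{-1}. Then w_{-1} and w_{-2} map A = K + ∑_{i≥2} K x^i into itself. -/
/-- `A = K + ∑_{i≥2} K xⁱ` viewed inside the Laurent polynomial ring `K[x,x⁻¹]`. -/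
def cuspL (K : Type*) [Field K] : Set (LaurentPolynomial K) :=
  Polynomial.toLaurent '' (cusp K : Set (Polynomial K))

/-- The `K`-linear operator on `K[x,x⁻¹]` sending `xⁿ ↦ f(n)·x^{n+d}`. -/
noncomputable def shiftScale (K : Type*) [Field K] (f : ℤ → K) (d : ℤ) :
    Module.End K (LaurentPolynomial K) :=
  (Finsupp.lsum K fun n : ℤ =>
    LinearMap.toSpanSingleton K (LaurentPolynomial K) (f n • LaurentPolynomial.T (n + d)))
    ∘ₗ (AddMonoidAlgebra.coeffLinearEquiv (R := K) (S := K) (M := ℤ)).toLinearMap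

/-- The operator `h = x·∂` on `K[x,x⁻¹]`, acting by `xⁿ ↦ n·xⁿ`. -/
noncomputable def hOp (K : Type*) [Field K] : Module.End K (LaurentPolynomial K) :=
  shiftScale K (fun n => (n : K)) 0

/-- Multiplication by `x^d` as a `K`-linear operator on `K[x,x⁻¹]`. -/
noncomputable def xMul (K : Type*) [Field K] (d : ℤ) : Module.End K (LaurentPolynomial K) :=
  LinearMap.mulLeft K (LaurentPolynomial.T d)

open Polynomial in
/-- `P_i(X) = (X-1)·(X+1)(X+2)⋯(X+i-2)·(X+i)`, the polynomial with
`w_{-i} = P_i(h)·x^{-i}`.  (For `i = 2` this is `(X-1)(X+2)`, i.e. `w_{-2} = (h+2)(h-1)x⁻²`.) -/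
noncomputable def Pneg (K : Type*) [Field K] (i : ℕ) : Polynomial K :=
  (X - 1) * (∏ k ∈ Finset.Icc 1 (i - 2), (X + (k : Polynomial K))) * (X + (i : Polynomial K))

open Polynomial in
/-- `Q_i(X) = (X-i-1)·(X-i+1)⋯(X-2)·X`, the polynomial with `xⁱ·w_{-i} = Q_i(h)`. -/
noncomputable def Qneg (K : Type*) [Field K] (i : ℕ) : Polynomial K :=
  (X - ((i : Polynomial K) + 1)) * (∏ k ∈ Finset.Icc 2 (i - 1), (X - (k : Polynomial K))) * X

/-- The element `w_{-i} = (h-1)(h+1)⋯(h+i-2)(h+i)·x^{-i}` of `D(K[x,x⁻¹])`, as an operator. -/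
noncomputable def wneg (K : Type*) [Field K] (i : ℕ) : Module.End K (LaurentPolynomial K) :=
  Polynomial.aeval (hOp K) (Pneg K i) * xMul K (-(i : ℤ))

/-- `w₁ = (h-1)·x`. -/
noncomputable def wone (K : Type*) [Field K] : Module.End K (LaurentPolynomial K) :=
  (hOp K - 1) * xMul K 1

/-- `w₋₁ = (h+1)(h-1)·x⁻¹`. -/
noncomputable def wnegone (K : Type*) [Field K] : Module.End K (LaurentPolynomial K) :=
  (hOp K + 1) * (hOp K - 1) * xMul K (-1)

/-!
`P(h)·x^{-d}` sends `xⁿ` to `P(n - d)·x^{n-d}`, so it preserves `A` as soon as `P` vanishes at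
every exponent where a monomial of `A` is pushed out of `A`. For `w₋₁` these exponents are `-1`
(from `1`) and `1` (from `x²`), for `w₋₂` they are `-2` (from `1`) and `1` (from `x³`), and the
factors `h + 1, h - 1`, resp. `h + 2, h - 1`, kill exactly them.
-/

open Polynomial LaurentPolynomial

section

variable {K : Type*} [Field K]

lemma shiftScale_single (f : ℤ → K) (d n : ℤ) (a : K) :
    shiftScale K f d (.single n a) = .single (n + d) (f n * a) := by
  rw [shiftScale, LinearMap.comp_apply]
  erw [Finsupp.lsum_single]
  simp only [LinearMap.toSpanSingleton_apply, T, AddMonoidAlgebra.smul_single, smul_eq_mul,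
    mul_one, mul_comm]

lemma coeff_shiftScale (f : ℤ → K) (d : ℤ) (q : K[T;T⁻¹]) (m : ℤ) :
    (shiftScale K f d q).coeff m = f (m - d) * q.coeff (m - d) := by
  induction q using AddMonoidAlgebra.induction_linear with
  | zero => simp
  | add p q hp hq => simp [hp, hq, mul_add]
  | single n a =>
    simp only [shiftScale_single, AddMonoidAlgebra.coeff_single, Finsupp.single_apply]
    by_cases h : n = m - d
    · simp [h]
    · rw [if_neg (by omega), if_neg h, mul_zero]

lemma coeff_hOp (q : K[T;T⁻¹]) (m : ℤ) : (hOp K q).coeff m = m * q.coeff m := by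
  simp [hOp, coeff_shiftScale]

lemma coeff_xMul (d : ℤ) (q : K[T;T⁻¹]) (m : ℤ) : (xMul K d q).coeff m = q.coeff (m - d) := by
  rw [xMul, LinearMap.mulLeft_apply, T, AddMonoidAlgebra.coeff_single_mul_apply, one_mul,
    neg_add_eq_sub]

lemma coeff_aeval_hOp (P : K[X]) (q : K[T;T⁻¹]) (m : ℤ) :
    (aeval (hOp K) P q).coeff m = P.eval (m : K) * q.coeff m := by
  induction P using Polynomial.induction_on generalizing q with
  | C a => simp [Algebra.algebraMap_eq_smul_one]
  | add P Q hP hQ => simp [hP, hQ, add_mul]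
  | monomial n a ih =>
    rw [pow_succ, ← mul_assoc, map_mul, aeval_X, Module.End.mul_apply, ih, coeff_hOp,
      eval_mul (q := X), eval_X, mul_assoc]

lemma coeff_aeval_hOp_mul_xMul (P : K[X]) (d : ℤ) (q : K[T;T⁻¹]) (m : ℤ) :
    ((aeval (hOp K) P * xMul K d) q).coeff m = P.eval (m : K) * q.coeff (m - d) := by
  rw [Module.End.mul_apply, coeff_aeval_hOp, coeff_xMul]

lemma coeff_toLaurent_natCast (p : K[X]) (k : ℕ) : (toLaurent p).coeff k = p.coeff k := by
  rw [coeff_toLaurent]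
  exact Finsupp.mapDomain_apply Nat.cast_injective _ k

lemma coeff_toLaurent_of_neg (p : K[X]) {n : ℤ} (hn : n < 0) : (toLaurent p).coeff n = 0 := by
  rw [coeff_toLaurent, Finsupp.mapDomain_of_notMem_range]
  rintro ⟨k, rfl⟩
  exact hn.not_ge (Int.natCast_nonneg k)

lemma toLaurent_trunc_of_coeff_neg {q : K[T;T⁻¹]} (hq : ∀ n < 0, q.coeff n = 0) :
    toLaurent (trunc q) = q := by
  ext n
  rcases lt_or_ge n 0 with hn | hn
  · rw [coeff_toLaurent_of_neg _ hn, hq n hn]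
  · lift n to ℕ using hn
    exact coeff_toLaurent_natCast _ n

lemma mem_cuspL_iff {q : K[T;T⁻¹]} :
    q ∈ cuspL K ↔ (∀ n < 0, q.coeff n = 0) ∧ q.coeff 1 = 0 := by
  constructor
  · rintro ⟨p, hp, rfl⟩
    exact ⟨fun n hn => coeff_toLaurent_of_neg p hn, (coeff_toLaurent_natCast p 1).trans hp⟩
  · rintro ⟨hneg, h1⟩
    exact ⟨trunc q, h1, toLaurent_trunc_of_coeff_neg hneg⟩

lemma aeval_hOp_mul_xMul_neg_mem_cuspL (P : K[X]) (d : ℕ)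
    (hP : ∀ n : ℤ, -d ≤ n → n ≤ 1 → n ≠ 0 → n + d ≠ 1 → P.eval (n : K) = 0)
    {q : K[T;T⁻¹]} (hq : q ∈ cuspL K) : (aeval (hOp K) P * xMul K (-d)) q ∈ cuspL K := by
  rw [mem_cuspL_iff] at hq ⊢
  obtain ⟨hneg, h1⟩ := hq
  have hcoeff : ∀ n : ℤ, n ≤ 1 → n ≠ 0 →
      P.eval (n : K) * q.coeff (n - -d) = 0 := by
    intro n hn1 hn0
    rw [sub_neg_eq_add]
    by_cases hlow : n + d < 0
    · rw [hneg _ hlow, mul_zero]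
    by_cases hone : n + d = 1
    · rw [hone, h1, mul_zero]
    rw [hP n (by omega) hn1 hn0 hone, zero_mul]
  simp only [coeff_aeval_hOp_mul_xMul]
  exact ⟨fun n hn => hcoeff n (hn.le.trans zero_le_one) hn.ne, hcoeff 1 le_rfl one_ne_zero⟩

lemma wnegone_eq : wnegone K = aeval (hOp K) ((X + 1) * (X - 1 : K[X])) * xMul K (-(1 : ℕ)) := by
  simp [wnegone]

end

theorem stmt10_general (K : Type*) [Field K] :
    (∀ q ∈ cuspL K, wnegone K q ∈ cuspL K) ∧
    (∀ q ∈ cuspL K, wneg K 2 q ∈ cuspL K) := by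
  refine ⟨fun q hq => ?_, fun q hq => ?_⟩
  · rw [wnegone_eq]
    refine aeval_hOp_mul_xMul_neg_mem_cuspL _ 1 (fun n _ _ _ _ => ?_) hq
    obtain rfl | rfl : n = -1 ∨ n = 1 := by omega
    all_goals simp
  · refine aeval_hOp_mul_xMul_neg_mem_cuspL (Pneg K 2) 2 (fun n _ _ _ _ => ?_) hq
    obtain rfl | rfl : n = -2 ∨ n = 1 := by omega
    all_goals simp [Pneg]

/-- The operators `w₋₂ = (h+2)(h-1)x⁻²` and `w₋₁ = (h+1)(h-1)x⁻¹` map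
`A = K + ∑_{i≥2} K xⁱ` into itself. -/
theorem stmt10 (K : Type*) [Field K] [CharZero K] :
    (∀ q ∈ cuspL K, wnegone K q ∈ cuspL K) ∧
    (∀ q ∈ cuspL K, wneg K 2 q ∈ cuspL K) :=
  stmt10_general K
end
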